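/- arXiv:1909.04471 — 2 statements merged into one kernel-verified Lean document; each statement's English description precedes it below -/
import Mathlib

section
/- Let f(z) = z + ∑_{k=3}^∞ a_k z^k be analytic on 𝔻 (so the coefficient of z² vanishes) with ∑_{k=3}^∞ k·(k−1)·|a_k| ≤ 1. Then f belongs to the parabolic starlike class S_p. -/
open Complex Metric

/-- The open unit disc in `ℂ`. -/
def unitDisc : Set ℂ := Metric.ball 0 1

/-- `f ∈ 𝒜ₙ`: `f` is analytic on the unit disc with power series
`f(z) = z + ∑_{k=n+1}^∞ a_k z^k`. -/
def MemA (n : ℕ) (f : ℂ → ℂ) : Prop :=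
  DifferentiableOn ℂ f unitDisc ∧
    ∃ a : ℕ → ℂ, ∀ z ∈ unitDisc, f z = z + ∑' k : ℕ, a k * z ^ (n + 1 + k)

/-- `f ∈ Ωₙ`: `f ∈ 𝒜ₙ` and `|z f'(z) - f(z)| < 1/2` on the unit disc. -/
def MemOmega (n : ℕ) (f : ℂ → ℂ) : Prop :=
  MemA n f ∧ ∀ z ∈ unitDisc, ‖z * deriv f z - f z‖ < 1 / 2

/-!
Write `w = z f'(z) / f(z)`. Both `z f' - f = ∑ (k + 2) a_k z^(k+3)` and `f - z = ∑ a_k z^(k+3)` are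
power series starting at `z³`, and `(k + 3)(k + 2) ≥ 3 (k + 2) ≥ 6` turns the coefficient condition
into `2 |z f' - f| + |f - z| ≤ (5/6) |z|³ < |z|`. Hence `|f| ≥ |z| - |f - z| > 2 |z f' - f|`, i.e.
`|w - 1| < 1/2`, and every such `w` lies inside the parabola `Re w > |w - 1|`.
-/

lemma norm_sub_one_lt_re_of_norm_sub_one_lt_half {w : ℂ} (h : ‖w - 1‖ < 1 / 2) :
    ‖w - 1‖ < w.re := by
  have := neg_le_of_abs_le (abs_re_le_norm (w - 1))
  rw [sub_re, one_re] at this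
  linarith

lemma ne_zero_and_norm_div_sub_one_lt_re {z u v : ℂ} (h : 2 * ‖u - v‖ + ‖v - z‖ < ‖z‖) :
    v ≠ 0 ∧ ‖u / v - 1‖ < (u / v).re := by
  have hv : 2 * ‖u - v‖ < ‖v‖ := by
    linarith [norm_sub_norm_le z v, norm_sub_rev z v]
  have hv0 : v ≠ 0 := norm_pos_iff.mp (by linarith [norm_nonneg (u - v)])
  refine ⟨hv0, norm_sub_one_lt_re_of_norm_sub_one_lt_half ?_⟩
  rw [div_sub_one hv0, norm_div, div_lt_iff₀ (norm_pos_iff.mpr hv0)]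
  linarith

lemma norm_tsum_mul_pow_le {c : ℕ → ℂ} {b : ℕ → ℝ} {B : ℝ} (hb : HasSum b B)
    (hcb : ∀ k, ‖c k‖ ≤ b k) {z : ℂ} (hz : ‖z‖ ≤ 1) (m : ℕ) :
    ‖∑' k, c k * z ^ (m + k)‖ ≤ ‖z‖ ^ m * B := by
  refine tsum_of_norm_bounded (hb.mul_left _) fun k => ?_
  rw [norm_mul, norm_pow, pow_add, mul_comm]
  gcongr
  · exact mul_le_of_le_one_right (by positivity) (pow_le_one₀ (norm_nonneg z) hz)
  · exact hcb k

lemma hasDerivAt_tsum_mul_pow {a : ℕ → ℂ} {n : ℕ}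
    (ha : Summable fun k : ℕ => ((n + 1 + k : ℕ) : ℝ) * ‖a k‖) {z : ℂ} (hz : ‖z‖ < 1) :
    HasDerivAt (fun y => ∑' k, a k * y ^ (n + 1 + k))
      (∑' k, ((n + 1 + k : ℕ) : ℂ) * a k * z ^ (n + k)) z := by
  refine hasDerivAt_tsum_of_isPreconnected (g := fun k y => a k * y ^ (n + 1 + k))
    (g' := fun k y => ((n + 1 + k : ℕ) : ℂ) * a k * y ^ (n + k)) ha isOpen_ball
    (convex_ball 0 1).isPreconnected (fun k y _ => ?_) (fun k y hy => ?_)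
    (mem_ball_self one_pos) (by simp) (mem_ball_zero_iff.mpr hz)
  · have h := (hasDerivAt_pow (n + 1 + k) y).const_mul (a k)
    rw [show n + 1 + k - 1 = n + k by omega] at h
    exact h.congr_deriv (by ring)
  · rw [norm_mul, norm_mul, Complex.norm_natCast, norm_pow]
    exact mul_le_of_le_one_right (by positivity)
      (pow_le_one₀ (norm_nonneg _) (mem_ball_zero_iff.mp hy).le)

lemma mul_deriv_sub_eq_tsum {f : ℂ → ℂ} {a : ℕ → ℂ} {n : ℕ}
    (hrep : ∀ z ∈ unitDisc, f z = z + ∑' k, a k * z ^ (n + 1 + k))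
    (ha : Summable fun k : ℕ => ((n + 1 + k : ℕ) : ℝ) * ‖a k‖) {z : ℂ} (hz : z ∈ unitDisc) :
    z * deriv f z - f z = ∑' k, ((n + k : ℕ) : ℂ) * a k * z ^ (n + 1 + k) := by
  have hz1 : ‖z‖ < 1 := mem_ball_zero_iff.mp hz
  have hderiv : deriv f z = 1 + ∑' k, ((n + 1 + k : ℕ) : ℂ) * a k * z ^ (n + k) :=
    (((hasDerivAt_id z).add (hasDerivAt_tsum_mul_pow ha hz1)).congr_of_eventuallyEq
      (Filter.eventually_of_mem (isOpen_ball.mem_nhds hz) hrep)).deriv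
  have hbound : ∀ (c : ℕ → ℂ), (∀ k, ‖c k‖ ≤ ((n + 1 + k : ℕ) : ℝ) * ‖a k‖) →
      Summable fun k => c k * z ^ (n + 1 + k) := fun c hc =>
    .of_norm_bounded ha fun k => by
      rw [norm_mul, norm_pow]
      exact (mul_le_of_le_one_right (norm_nonneg _)
        (pow_le_one₀ (norm_nonneg z) hz1.le)).trans (hc k)
  have hshift : ∀ k, z * (((n + 1 + k : ℕ) : ℂ) * a k * z ^ (n + k)) =
      ((n + 1 + k : ℕ) : ℂ) * a k * z ^ (n + 1 + k) := fun k => by ring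
  rw [hderiv, hrep z hz, mul_add, mul_one, ← tsum_mul_left, add_sub_add_left_eq_sub]
  simp_rw [hshift]
  rw [← (hbound _ fun k => ?_).tsum_sub (hbound _ fun k => ?_)]
  · congr 1 with k
    push_cast
    ring
  · rw [norm_mul, Complex.norm_natCast]
  · exact le_mul_of_one_le_left (norm_nonneg _) (by norm_cast; omega)

theorem stmt_11_general (f : ℂ → ℂ) (a : ℕ → ℂ)
    (hrep : ∀ z ∈ unitDisc, f z = z + ∑' k : ℕ, a k * z ^ (3 + k))
    (hsum : Summable fun k : ℕ => ((3 : ℝ) + k) * ((2 : ℝ) + k) * ‖a k‖)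
    (hle : ∑' k : ℕ, ((3 : ℝ) + k) * ((2 : ℝ) + k) * ‖a k‖ ≤ 1) :
    ∀ z ∈ unitDisc, z ≠ 0 →
      f z ≠ 0 ∧
        (z * deriv f z / f z).re > ‖z * deriv f z / f z - 1‖ := by
  intro z hzD hz0
  set S := ∑' k : ℕ, ((3 : ℝ) + k) * ((2 : ℝ) + k) * ‖a k‖
  have hz : ‖z‖ < 1 := mem_ball_zero_iff.mp hzD
  have hsum_lin : Summable fun k : ℕ => ((2 + 1 + k : ℕ) : ℝ) * ‖a k‖ :=
    hsum.of_nonneg_of_le (fun k => by positivity) fun k => by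
      push_cast
      nlinarith [mul_nonneg (mul_nonneg (by positivity : (0 : ℝ) ≤ 3 + k)
        (by positivity : (0 : ℝ) ≤ 1 + k)) (norm_nonneg (a k))]
  have hdiff : ‖z * deriv f z - f z‖ ≤ ‖z‖ ^ 3 * (S / 3) := by
    rw [mul_deriv_sub_eq_tsum (n := 2) hrep hsum_lin hzD]
    refine norm_tsum_mul_pow_le (hsum.hasSum.div_const 3) (fun k => ?_) hz.le 3
    rw [norm_mul, Complex.norm_natCast]
    push_cast
    nlinarith [mul_nonneg (mul_nonneg (by positivity : (0 : ℝ) ≤ 2 + k) k.cast_nonneg)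
      (norm_nonneg (a k))]
  have hrest : ‖f z - z‖ ≤ ‖z‖ ^ 3 * (S / 6) := by
    rw [hrep z hzD, add_sub_cancel_left]
    refine norm_tsum_mul_pow_le (hsum.hasSum.div_const 6) (fun k => ?_) hz.le 3
    nlinarith [mul_nonneg (mul_nonneg (by positivity : (0 : ℝ) ≤ 5 + k) k.cast_nonneg)
      (norm_nonneg (a k))]
  have hcube : ‖z‖ ^ 3 < ‖z‖ := pow_lt_self_of_lt_one₀ (norm_pos_iff.mpr hz0) hz (by norm_num)
  have hS : ‖z‖ ^ 3 * S ≤ ‖z‖ ^ 3 := mul_le_of_le_one_right (by positivity) hle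
  exact ne_zero_and_norm_div_sub_one_lt_re (z := z) (by linarith [pow_nonneg (norm_nonneg z) 3])

theorem stmt_11 (f : ℂ → ℂ) (a : ℕ → ℂ)
    (hf : DifferentiableOn ℂ f unitDisc)
    (hrep : ∀ z ∈ unitDisc, f z = z + ∑' k : ℕ, a k * z ^ (3 + k))
    (hsum : Summable fun k : ℕ => ((3 : ℝ) + k) * ((2 : ℝ) + k) * ‖a k‖)
    (hle : ∑' k : ℕ, ((3 : ℝ) + k) * ((2 : ℝ) + k) * ‖a k‖ ≤ 1) :
    ∀ z ∈ unitDisc, z ≠ 0 →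
      f z ≠ 0 ∧
        (z * deriv f z / f z).re > ‖z * deriv f z / f z - 1‖ :=
  stmt_11_general f a hrep hsum hle
end

section
/- Let f ∈ Ω and let z ∈ ℂ with 0 < |z| < 2(1 − e⁻¹)/(2 − e⁻¹). Then f(z) ≠ 0 and |log(z·f'(z)/f(z))| < 1, where log denotes the principal branch of the complex logarithm. (That is, the S*_e-radius for the class Ω is 2(1 − e⁻¹)/(2 − e⁻¹), where S*_e is the class of f with z·f'(z)/f(z) taking values in {w : |log w| < 1}.) -/
/-!
Write `W(z) = z f'(z) - f(z)`. Since `f(0) = 0`, `W` vanishes to second order at the origin, so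
the Schwarz lemma turns `|W| < 1/2` into `|W(z)| ≤ |z|²/2`. As `(f(z)/z)' = W(z)/z²`, the
function `f(z)/z` is `1/2`-Lipschitz with value `f'(0) = 1` at the origin, whence
`|f(z)| ≥ |z|(1 - |z|/2)`. Therefore `|z f'(z)/f(z) - 1| = |W(z)|/|f(z)| ≤ |z|/(2 - |z|)`, which
is `< 1 - e⁻¹` exactly below the stated radius, and `|log(1 + u)| ≤ -log(1 - |u|) < 1` for
`|u| < 1 - e⁻¹`.
-/

open Complex Metric

open Filter Topology Asymptotics

theorem Complex.norm_log_one_add_le_neg_log_one_sub {u : ℂ} (hu : ‖u‖ < 1) :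
    ‖log (1 + u)‖ ≤ -Real.log (1 - ‖u‖) := by
  have hreal : HasSum (fun n : ℕ => ‖u‖ ^ n / n) (-Real.log (1 - ‖u‖)) := by
    rw [← hasSum_nat_add_iff' 1]
    simpa using Real.hasSum_pow_div_log_of_abs_lt_one (by rwa [abs_norm])
  rw [← (hasSum_taylorSeries_log hu).tsum_eq]
  exact tsum_of_norm_bounded hreal fun n => by simp [norm_pow]

theorem Complex.norm_log_one_add_lt_one {u : ℂ} (hu : ‖u‖ < 1 - (Real.exp 1)⁻¹) :
    ‖log (1 + u)‖ < 1 := by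
  have he : 0 < (Real.exp 1)⁻¹ := by positivity
  have hlog : -1 < Real.log (1 - ‖u‖) := by
    rw [Real.lt_log_iff_exp_lt (by linarith), Real.exp_neg]
    linarith
  linarith [norm_log_one_add_le_neg_log_one_sub (u := u) (by linarith)]

theorem isBigO_tsum_mul_pow_one (a : ℕ → ℂ) :
    (fun z : ℂ => ∑' k, a k * z ^ k) =O[𝓝 0] (fun _ => (1 : ℂ)) := by
  by_cases hs : ∃ w : ℂ, w ≠ 0 ∧ Summable (fun k => a k * w ^ k)
  · obtain ⟨w, hw0, hsum⟩ := hs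
    obtain ⟨M, hM⟩ := (summable_norm_iff.mpr hsum).tendsto_atTop_zero.bddAbove_range
    have hMk (k : ℕ) : ‖a k‖ * ‖w‖ ^ k ≤ M := by
      simpa [norm_mul, norm_pow] using hM (Set.mem_range_self k)
    refine isBigO_iff.mpr ⟨2 * M, ?_⟩
    filter_upwards [closedBall_mem_nhds (0 : ℂ) (half_pos (norm_pos_iff.mpr hw0))] with z hz
    rw [mem_closedBall_zero_iff] at hz
    have hterm (k : ℕ) : ‖a k * z ^ k‖ ≤ M * (1 / 2) ^ k := by
      calc ‖a k * z ^ k‖ = ‖a k‖ * ‖z‖ ^ k := by rw [norm_mul, norm_pow]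
        _ ≤ ‖a k‖ * (‖w‖ / 2) ^ k := by gcongr
        _ = ‖a k‖ * ‖w‖ ^ k * (1 / 2) ^ k := by ring
        _ ≤ M * (1 / 2) ^ k := by gcongr; exact hMk k
    simpa [mul_comm] using tsum_of_norm_bounded (hasSum_geometric_two.mul_left M) hterm
  · -- the series diverges at every `w ≠ 0`, where `tsum` takes its junk value `0`
    push Not at hs
    refine isBigO_iff.mpr ⟨‖∑' k, a k * (0 : ℂ) ^ k‖, Eventually.of_forall fun z => ?_⟩
    rcases eq_or_ne z 0 with rfl | hz
    · simp
    · simp [tsum_eq_zero_of_not_summable (hs z hz)]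

namespace MemA

variable {n : ℕ} {f : ℂ → ℂ}

theorem apply_zero (hf : MemA n f) : f 0 = 0 := by
  obtain ⟨-, a, ha⟩ := hf
  simp [ha 0 (mem_ball_self one_pos)]

theorem hasDerivAt_zero (hn : 1 ≤ n) (hf : MemA n f) : HasDerivAt f 1 0 := by
  have h0 := hf.apply_zero
  obtain ⟨-, a, ha⟩ := hf
  have hsub : (fun z => f z - z) =ᶠ[𝓝 0] fun z => z ^ (n + 1) * ∑' k, a k * z ^ k := by
    filter_upwards [ball_mem_nhds (0 : ℂ) one_pos] with z hz
    simp [ha z hz, ← tsum_mul_left, pow_add, mul_left_comm]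
  have hlittle : (fun z => f z - z) =o[𝓝 0] fun z => z :=
    (((isBigO_refl (fun z : ℂ => z ^ (n + 1)) _).mul (isBigO_tsum_mul_pow_one a)).trans_isLittleO
      (by simpa using isLittleO_pow_id (by omega : 1 < n + 1))).congr' hsub.symm (.refl _ _)
  rw [hasDerivAt_iff_isLittleO]
  simpa [h0] using hlittle

end MemA

theorem Complex.norm_le_mul_div_sq_of_hasDerivAt_zero {W : ℂ → ℂ} {R M : ℝ}
    (hd : DifferentiableOn ℂ W (ball 0 R)) (h0 : W 0 = 0) (h' : HasDerivAt W 0 0)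
    (hM : ∀ z ∈ ball (0 : ℂ) R, ‖W z‖ ≤ M) {z : ℂ} (hz : z ∈ ball 0 R) :
    ‖W z‖ ≤ M * (‖z‖ / R) ^ 2 := by
  have hmaps : Set.MapsTo W (ball 0 R) (closedBall (W 0) M) := fun w hw => by
    simpa [h0] using hM w hw
  have hlittle : (W · - W 0) =o[𝓝 0] fun w => ‖w - 0‖ ^ 1 := by
    simpa [h0] using (hasDerivAt_iff_isLittleO.mp h').norm_right
  simpa [h0] using dist_le_mul_div_pow_of_mapsTo_ball_of_isLittleO hd hmaps hlittle hz

theorem hasDerivAt_dslope_zero {𝕜 : Type*} [NontriviallyNormedField 𝕜] {f : 𝕜 → 𝕜} {z : 𝕜}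
    (h0 : f 0 = 0) (hf : DifferentiableAt 𝕜 f z) (hz : z ≠ 0) :
    HasDerivAt (dslope f 0) ((z * deriv f z - f z) / z ^ 2) z := by
  have hquot : HasDerivAt (fun w => f w / w) ((deriv f z * z - f z * 1) / z ^ 2) z :=
    hf.hasDerivAt.div (hasDerivAt_id z) hz
  refine (by simpa [mul_comm] using hquot : HasDerivAt _ _ z).congr_of_eventuallyEq ?_
  filter_upwards [isOpen_ne.mem_nhds hz] with w hw
  simp [dslope_of_ne _ hw, slope_def_field, h0]

theorem Complex.norm_dslope_sub_deriv_le {f : ℂ → ℂ} {R M : ℝ}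
    (hd : DifferentiableOn ℂ f (ball 0 R)) (h0 : f 0 = 0)
    (hW : ∀ w ∈ ball (0 : ℂ) R, ‖w * deriv f w - f w‖ ≤ M * ‖w‖ ^ 2) {z : ℂ}
    (hz : z ∈ ball 0 R) : ‖dslope f 0 z - deriv f 0‖ ≤ M * ‖z‖ := by
  have hR : 0 < R := pos_of_mem_ball hz
  have hP : AnalyticOnNhd ℂ (dslope f 0) (ball 0 R) :=
    ((differentiableOn_dslope (ball_mem_nhds 0 hR)).mpr hd).analyticOnNhd isOpen_ball
  have hbound_ne : ∀ w ∈ ball (0 : ℂ) R, w ≠ 0 → ‖deriv (dslope f 0) w‖ ≤ M := by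
    intro w hw hw0
    rw [(hasDerivAt_dslope_zero h0 (hd.differentiableAt (isOpen_ball.mem_nhds hw)) hw0).deriv,
      norm_div, norm_pow, div_le_iff₀ (by positivity)]
    exact hW w hw
  have hbound : ∀ w ∈ ball (0 : ℂ) R, ‖deriv (dslope f 0) w‖ ≤ M := by
    intro w hw
    rcases eq_or_ne w 0 with rfl | hw0
    · -- at the origin the bound passes to the limit, the derivative being continuous
      have hcont := (hP.deriv.continuousOn.continuousAt (isOpen_ball.mem_nhds hw)).norm
      refine le_of_tendsto (hcont.tendsto.mono_left (nhdsWithin_le_nhds (s := {0}ᶜ))) ?_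
      filter_upwards [mem_nhdsWithin_of_mem_nhds (isOpen_ball.mem_nhds hw), self_mem_nhdsWithin]
        with x hx hx0 using hbound_ne x hx hx0
    · exact hbound_ne w hw hw0
  simpa using (convex_ball (0 : ℂ) R).norm_image_sub_le_of_norm_deriv_le
    (fun w hw => (hP w hw).differentiableAt) hbound (mem_ball_self hR) hz

namespace MemOmega

variable {n : ℕ} {f : ℂ → ℂ} {z : ℂ}

theorem norm_mul_deriv_sub_le (hf : MemOmega n f) (hz : z ∈ unitDisc) :
    ‖z * deriv f z - f z‖ ≤ ‖z‖ ^ 2 / 2 := by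
  obtain ⟨hA, hW⟩ := hf
  have hfa : AnalyticOnNhd ℂ f unitDisc := hA.1.analyticOnNhd isOpen_ball
  have hWd : DifferentiableOn ℂ (fun w => w * deriv f w - f w) unitDisc :=
    (differentiableOn_id.mul hfa.deriv.differentiableOn).sub hA.1
  have h0 : (0 : ℂ) ∈ unitDisc := mem_ball_self one_pos
  -- `w f'(w) - f(w)` has derivative `w f''(w)`, which vanishes at the origin
  have hW' : HasDerivAt (fun w => w * deriv f w - f w)
      (1 * deriv f 0 + 0 * deriv (deriv f) 0 - deriv f 0) 0 :=
    ((hasDerivAt_id' 0).mul (hfa.deriv 0 h0).differentiableAt.hasDerivAt).sub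
      (hfa 0 h0).differentiableAt.hasDerivAt
  have := norm_le_mul_div_sq_of_hasDerivAt_zero hWd (by simp [hA.apply_zero])
    (by simpa using hW') (fun w hw => (hW w hw).le) hz
  linarith

theorem norm_sub_self_le (hn : 1 ≤ n) (hf : MemOmega n f) (hz : z ∈ unitDisc) :
    ‖f z - z‖ ≤ ‖z‖ ^ 2 / 2 := by
  have h0 := hf.1.apply_zero
  have hP := norm_dslope_sub_deriv_le (M := 1 / 2) hf.1.1 h0
    (fun w hw => by linarith [hf.norm_mul_deriv_sub_le hw]) hz
  rw [(hf.1.hasDerivAt_zero hn).deriv] at hP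
  have hfz : z * dslope f 0 z = f z := by simpa [h0] using sub_smul_dslope f 0 z
  calc ‖f z - z‖ = ‖z‖ * ‖dslope f 0 z - 1‖ := by rw [← norm_mul, mul_sub, hfz, mul_one]
    _ ≤ ‖z‖ * (1 / 2 * ‖z‖) := by gcongr
    _ = ‖z‖ ^ 2 / 2 := by ring

theorem norm_mul_deriv_div_sub_one_le (hn : 1 ≤ n) (hf : MemOmega n f) (hz : z ∈ unitDisc)
    (hz0 : z ≠ 0) : f z ≠ 0 ∧ ‖z * deriv f z / f z - 1‖ ≤ ‖z‖ / (2 - ‖z‖) := by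
  have hz1 : ‖z‖ < 1 := mem_ball_zero_iff.mp hz
  have hzpos : 0 < ‖z‖ := norm_pos_iff.mpr hz0
  have hfz : ‖z‖ * (2 - ‖z‖) / 2 ≤ ‖f z‖ := by
    have := norm_sub_norm_le z (z - f z)
    rw [sub_sub_cancel, norm_sub_rev] at this
    nlinarith [hf.norm_sub_self_le hn hz]
  have hfz0 : f z ≠ 0 := norm_pos_iff.mp (lt_of_lt_of_le (by nlinarith) hfz)
  refine ⟨hfz0, ?_⟩
  rw [div_sub_one hfz0, norm_div, div_le_div_iff₀ (norm_pos_iff.mpr hfz0) (by linarith)]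
  calc ‖z * deriv f z - f z‖ * (2 - ‖z‖) ≤ ‖z‖ ^ 2 / 2 * (2 - ‖z‖) := by
        gcongr
        · linarith
        · exact hf.norm_mul_deriv_sub_le hz
    _ = ‖z‖ * (‖z‖ * (2 - ‖z‖) / 2) := by ring
    _ ≤ ‖z‖ * ‖f z‖ := by gcongr

end MemOmega

theorem stmt_17 (f : ℂ → ℂ) (hf : MemOmega 1 f) (z : ℂ) (hz0 : 0 < ‖z‖)
    (hz : ‖z‖ < 2 * (1 - (Real.exp 1)⁻¹) / (2 - (Real.exp 1)⁻¹)) :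
    f z ≠ 0 ∧ ‖Complex.log (z * deriv f z / f z)‖ < 1 := by
  have he0 : 0 < (Real.exp 1)⁻¹ := by positivity
  have he1 : (Real.exp 1)⁻¹ < 1 := inv_lt_one_of_one_lt₀ (Real.one_lt_exp_iff.mpr one_pos)
  rw [lt_div_iff₀ (by linarith)] at hz
  have hzD : z ∈ unitDisc := mem_ball_zero_iff.mpr (by nlinarith)
  obtain ⟨hfz, hle⟩ := hf.norm_mul_deriv_div_sub_one_le le_rfl hzD (norm_pos_iff.mp hz0)
  refine ⟨hfz, ?_⟩
  rw [← add_sub_cancel (1 : ℂ) (z * deriv f z / f z)]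
  refine norm_log_one_add_lt_one (hle.trans_lt ?_)
  rw [div_lt_iff₀ (by linarith [mem_ball_zero_iff.mp hzD])]
  nlinarith
end
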